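/- Let (L; π₁) and (L; π₂) be constrained literals over the same literal L, with π₁ = ⋀_{i∈I₁} ν_i and π₂ = ⋀_{i∈I₂} η_i in normal form, and let {σ_i | i ∈ I₂} be the induced substitutions of π₂. Then ⋃_{i∈I₂} Gnd(Lσ_i; π₁σ_i) = Gnd(L; π₁) \ Gnd(L; π₂). -/

import Mathlib

/-! Basic framework for the Bernays–Schönfinkel fragment: literals over a
signature with predicate symbols `P` (arities `ar`), variables `V` and a finite
domain of constants `D`; dismatching constraints with left-hand-side terms over
`V` and right-hand-side terms over fresh variables `W`. -/

/-- A first-order literal: polarity, predicate symbol and argument tuple of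
terms, each term being a variable (`Sum.inl`) or a constant (`Sum.inr`). -/
structure Lit (P : Type) (ar : P → ℕ) (V D : Type) where
  pol : Bool
  p : P
  args : Fin (ar p) → V ⊕ D

/-- Apply a substitution (mapping variables to terms) to a term. -/
def substT {V V' D : Type} (σ : V → V' ⊕ D) : V ⊕ D → V' ⊕ D :=
  Sum.elim σ Sum.inr

/-- Apply a substitution to a literal. -/
def Lit.subst {P : Type} {ar : P → ℕ} {V V' D : Type}
    (L : Lit P ar V D) (σ : V → V' ⊕ D) : Lit P ar V' D :=
  ⟨L.pol, L.p, fun j => substT σ (L.args j)⟩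

/-- The ground literal obtained from `L` by a grounding substitution `δ`. -/
def Lit.ground {P : Type} {ar : P → ℕ} {V D : Type}
    (L : Lit P ar V D) (δ : V → D) : Lit P ar Empty D :=
  L.subst (fun v => Sum.inr (δ v))

/-- The variables occurring in a literal. -/
def Lit.vars {P : Type} {ar : P → ℕ} {V D : Type} (L : Lit P ar V D) : Set V :=
  {v | ∃ j, L.args j = Sum.inl v}

/-- A dismatching constraint `⋀ᵢ s⃗ᵢ ≠ t⃗ᵢ`: a family of subconstraints indexed by
`ι`, each a pair of term tuples of the same dimension; left-hand sides over
variables `V`, right-hand sides over (fresh) variables `W`. -/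
structure DConstraint (V W D : Type) : Type 1 where
  ι : Type
  dim : ι → ℕ
  lhs : ∀ i, Fin (dim i) → V ⊕ D
  rhs : ∀ i, Fin (dim i) → W ⊕ D

/-- `δ` is a solution of `π` iff for each subconstraint `i`, the grounded
left-hand side `s⃗ᵢδ` is not an instance of the right-hand side `t⃗ᵢ`. -/
def DConstraint.Solution {V W D : Type} (π : DConstraint V W D) (δ : V → D) : Prop :=
  ∀ i, ¬ ∃ ξ : W → D, ∀ j, Sum.elim ξ id (π.rhs i j) = Sum.elim δ id (π.lhs i j)

/-- Apply a substitution to (the left-hand sides of) a constraint. -/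
def DConstraint.subst {V V' W D : Type} (π : DConstraint V W D) (σ : V → V' ⊕ D) :
    DConstraint V' W D :=
  ⟨π.ι, π.dim, fun i j => substT σ (π.lhs i j), π.rhs⟩

/-- Conjunction of two constraints (with variable-disjoint right-hand sides). -/
def DConstraint.and {V W₁ W₂ D : Type} (π₁ : DConstraint V W₁ D)
    (π₂ : DConstraint V W₂ D) : DConstraint V (W₁ ⊕ W₂) D where
  ι := π₁.ι ⊕ π₂.ι
  dim := Sum.elim π₁.dim π₂.dim
  lhs := fun i => match i with
    | .inl i => π₁.lhs i
    | .inr i => π₂.lhs i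
  rhs := fun i => match i with
    | .inl i => fun j => Sum.map Sum.inl id (π₁.rhs i j)
    | .inr i => fun j => Sum.map Sum.inr id (π₂.rhs i j)

/-- The left-hand-side variables of a constraint. -/
def DConstraint.LVar {V W D : Type} (π : DConstraint V W D) : Set V :=
  {v | ∃ i j, π.lhs i j = Sum.inl v}

/-- The set of ground literals covered by the constrained literal `(L; π)`. -/
def Gnd {P : Type} {ar : P → ℕ} {V W D : Type}
    (L : Lit P ar V D) (π : DConstraint V W D) : Set (Lit P ar Empty D) :=
  {g | ∃ δ : V → D, π.Solution δ ∧ g = L.ground δ}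

/-- Renaming of the variables `V` into the extended variable set `V ⊕ W₂`
(the right-hand-side variables of `π₂` become ordinary variables after applying
an induced substitution of `π₂`). -/
def embV {V W₂ D : Type} : V → (V ⊕ W₂) ⊕ D := fun v => Sum.inl (Sum.inl v)


/-! Removing `Gnd(L; π₂)` from `Gnd(L; π₁)` keeps exactly the groundings `δ` of `L` that solve
`π₁` but violate some subconstraint `xᵢ ≠ tᵢ` of `π₂`. Since the `xᵢ` are variables, `δ` violates
it iff `δ` factors through the induced substitution `σᵢ`, i.e. iff `Lδ` is a ground instance of
`Lσᵢ`; and grounding `(Lσᵢ; π₁σᵢ)` by `δ'` is the same as grounding `(L; π₁)` by `σᵢδ'`. -/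

theorem elim_substT {V V' D : Type} (σ : V → V' ⊕ D) (δ : V' → D) (t : V ⊕ D) :
    Sum.elim δ id (substT σ t) = Sum.elim (fun v => Sum.elim δ id (σ v)) id t := by
  cases t <;> rfl

theorem Lit.ground_eq_mk {P V D : Type} {ar : P → ℕ} (L : Lit P ar V D) (δ : V → D) :
    L.ground δ = ⟨L.pol, L.p, fun j => Sum.inr (Sum.elim δ id (L.args j))⟩ := by
  simp only [Lit.ground, Lit.subst]
  congr 2 with j
  cases L.args j <;> rfl

theorem Lit.ground_subst {P V V' D : Type} {ar : P → ℕ} (L : Lit P ar V D)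
    (σ : V → V' ⊕ D) (δ : V' → D) :
    (L.subst σ).ground δ = L.ground (fun v => Sum.elim δ id (σ v)) := by
  simp only [Lit.ground_eq_mk, Lit.subst, elim_substT]

theorem Lit.eqOn_vars_of_ground_eq {P V D : Type} {ar : P → ℕ} {L : Lit P ar V D}
    {δ δ₂ : V → D} (h : L.ground δ = L.ground δ₂) : Set.EqOn δ δ₂ L.vars := by
  rintro v ⟨j, hj⟩
  rw [Lit.ground_eq_mk, Lit.ground_eq_mk, Lit.mk.injEq] at h
  simpa [hj] using congrFun (eq_of_heq h.2.2) j

theorem DConstraint.solution_subst_iff {V V' W D : Type} (π : DConstraint V W D)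
    (σ : V → V' ⊕ D) (δ : V' → D) :
    (π.subst σ).Solution δ ↔ π.Solution (fun v => Sum.elim δ id (σ v)) := by
  simp only [DConstraint.Solution, DConstraint.subst, elim_substT]

theorem DConstraint.solution_congr {V W D : Type} (π : DConstraint V W D) {δ δ₂ : V → D}
    (h : Set.EqOn δ δ₂ π.LVar) : π.Solution δ ↔ π.Solution δ₂ := by
  have lhs_eq : ∀ i j, Sum.elim δ id (π.lhs i j) = Sum.elim δ₂ id (π.lhs i j) := by
    intro i j
    rcases hij : π.lhs i j with v | d
    · exact h ⟨i, j, hij⟩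
    · rfl
  simp only [DConstraint.Solution, lhs_eq]

theorem mem_Gnd_subst_iff {P V V' W D : Type} {ar : P → ℕ} (L : Lit P ar V D)
    (π : DConstraint V W D) (σ : V → V' ⊕ D) (g : Lit P ar Empty D) :
    g ∈ Gnd (L.subst σ) (π.subst σ) ↔
      ∃ δ : V' → D, π.Solution (fun v => Sum.elim δ id (σ v)) ∧
        g = L.ground (fun v => Sum.elim δ id (σ v)) := by
  simp only [Gnd, Set.mem_ofPred_eq, DConstraint.solution_subst_iff, Lit.ground_subst]

theorem Gnd_diff_Gnd {P V W₁ W₂ D : Type} {ar : P → ℕ} (L : Lit P ar V D)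
    (π₁ : DConstraint V W₁ D) (π₂ : DConstraint V W₂ D) (h₂ : π₂.LVar ⊆ L.vars) :
    Gnd L π₁ \ Gnd L π₂ =
      {g | ∃ δ : V → D, π₁.Solution δ ∧ ¬ π₂.Solution δ ∧ g = L.ground δ} := by
  ext g
  constructor
  · rintro ⟨⟨δ, hδ₁, rfl⟩, hg⟩
    exact ⟨δ, hδ₁, fun hδ₂ => hg ⟨δ, hδ₂, rfl⟩, rfl⟩
  · rintro ⟨δ, hδ₁, hδ₂, rfl⟩
    refine ⟨⟨δ, hδ₁, rfl⟩, ?_⟩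
    rintro ⟨δ', hδ', hg⟩
    exact hδ₂ ((π₂.solution_congr ((Lit.eqOn_vars_of_ground_eq hg).mono h₂)).2 hδ')

theorem Sum.elim_map_inr {V W D : Type} (δ : V ⊕ W → D) (t : W ⊕ D) :
    Sum.elim δ id (Sum.map Sum.inr id t) = Sum.elim (fun w => δ (Sum.inr w)) id t := by
  cases t <;> rfl

theorem DConstraint.exists_match_iff_exists_factor {V W D : Type} (π : DConstraint V W D)
    (i : π.ι) (x : Fin (π.dim i) → V) (hx : ∀ j, π.lhs i j = Sum.inl (x j))
    (τ : V ⊕ W → (V ⊕ W) ⊕ D)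
    (hτ₁ : ∀ j, τ (Sum.inl (x j)) = Sum.map Sum.inr id (π.rhs i j))
    (hτ₂ : ∀ u, (∀ j, Sum.inl (x j) ≠ u) → τ u = Sum.inl u) (δ : V → D) :
    (∃ ξ : W → D, ∀ j, Sum.elim ξ id (π.rhs i j) = Sum.elim δ id (π.lhs i j)) ↔
      ∃ δ' : V ⊕ W → D, ∀ v, Sum.elim δ' id (τ (Sum.inl v)) = δ v := by
  constructor
  · rintro ⟨ξ, hξ⟩
    refine ⟨Sum.elim δ ξ, fun v => ?_⟩
    by_cases hv : ∃ j, x j = v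
    · obtain ⟨j, rfl⟩ := hv
      simpa [hτ₁, Sum.elim_map_inr, hx] using hξ j
    · push Not at hv
      rw [hτ₂ _ fun j h => hv j (Sum.inl_injective h)]
      rfl
  · rintro ⟨δ', hδ'⟩
    refine ⟨fun w => δ' (Sum.inr w), fun j => ?_⟩
    rw [hx, ← Sum.elim_map_inr, ← hτ₁]
    exact hδ' (x j)

theorem stmt2_general {P V W₁ W₂ D : Type} {ar : P → ℕ}
    (L : Lit P ar V D)
    (π₁ : DConstraint V W₁ D) (π₂ : DConstraint V W₂ D)
    (h₂ : π₂.LVar ⊆ L.vars)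
    (x : ∀ i : π₂.ι, Fin (π₂.dim i) → V)
    (hx : ∀ i j, π₂.lhs i j = Sum.inl (x i j))
    (σ : π₂.ι → (V ⊕ W₂) → (V ⊕ W₂) ⊕ D)
    (hσ1 : ∀ i j, σ i (Sum.inl (x i j)) = Sum.map Sum.inr id (π₂.rhs i j))
    (hσ2 : ∀ i u, (∀ j, Sum.inl (x i j) ≠ u) → σ i u = Sum.inl u) :
    (⋃ i : π₂.ι, Gnd ((L.subst embV).subst (σ i)) ((π₁.subst embV).subst (σ i)))
      = Gnd L π₁ \ Gnd L π₂ := by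
  have factor_iff := fun i =>
    π₂.exists_match_iff_exists_factor i (x i) (hx i) (σ i) (hσ1 i) (hσ2 i)
  rw [Gnd_diff_Gnd L π₁ π₂ h₂]
  ext g
  simp only [Set.mem_iUnion, mem_Gnd_subst_iff, DConstraint.solution_subst_iff, Lit.ground_subst,
    Set.mem_ofPred_eq]
  constructor
  · rintro ⟨i, δ', hδ', rfl⟩
    exact ⟨_, hδ', not_forall_not.2 ⟨i, (factor_iff i _).2 ⟨δ', fun _ => rfl⟩⟩, rfl⟩
  · rintro ⟨δ, hδ, hviol, rfl⟩
    obtain ⟨i, hi⟩ := not_forall_not.1 hviol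
    obtain ⟨δ', hδ'⟩ := (factor_iff i δ).1 hi
    obtain rfl : (fun v => Sum.elim δ' id (σ i (Sum.inl v))) = δ := funext hδ'
    exact ⟨i, δ', hδ, rfl⟩

/-- Difference: Let `(L; π₁)`, `(L; π₂)` be constrained literals over
the same literal `L` (finite domain `D`), with `π₂ = ⋀_{i∈I₂} x⃗ᵢ ≠ t⃗ᵢ` in normal
form (left-hand sides are tuples `x i` of distinct variables) and let `σ i` be the
induced substitution of the `i`-th subconstraint of `π₂` (mapping `x i j` to
`t⃗ᵢ`'s entries, identity elsewhere).  Then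
`⋃_{i∈I₂} Gnd(Lσᵢ; π₁σᵢ) = Gnd(L; π₁) \ Gnd(L; π₂)`. -/
theorem stmt2 {P V W₁ W₂ D : Type} {ar : P → ℕ} [Fintype D] [Nonempty D]
    (L : Lit P ar V D)
    (π₁ : DConstraint V W₁ D) (π₂ : DConstraint V W₂ D)
    (h₁ : π₁.LVar ⊆ L.vars) (h₂ : π₂.LVar ⊆ L.vars)
    (x : ∀ i : π₂.ι, Fin (π₂.dim i) → V)
    (hx : ∀ i j, π₂.lhs i j = Sum.inl (x i j))
    (hinj : ∀ i, Function.Injective (x i))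
    (σ : π₂.ι → (V ⊕ W₂) → (V ⊕ W₂) ⊕ D)
    (hσ1 : ∀ i j, σ i (Sum.inl (x i j)) = Sum.map Sum.inr id (π₂.rhs i j))
    (hσ2 : ∀ i u, (∀ j, Sum.inl (x i j) ≠ u) → σ i u = Sum.inl u) :
    (⋃ i : π₂.ι, Gnd ((L.subst embV).subst (σ i)) ((π₁.subst embV).subst (σ i)))
      = Gnd L π₁ \ Gnd L π₂ :=
  stmt2_general L π₁ π₂ h₂ x hx σ hσ1 hσ2
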